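/- arXiv:1407.1067 — 6 statements merged into one kernel-verified Lean document; each statement's English description precedes it below -/
import Mathlib

section
/- Let A and B be positive semidefinite d×d complex matrices and let α ∈ (0,1). Then Tr((A+B)^α) ≤ Tr(A^α) + Tr(B^α). -/
open scoped BigOperators ComplexOrder

/-- Power of a Hermitian matrix taken on its support: eigenvalue 0 maps to 0,
eigenvalue x > 0 maps to x ^ α. Junk value 0 for non-Hermitian matrices. -/
noncomputable def mPow {d : ℕ} (A : Matrix (Fin d) (Fin d) ℂ) (α : ℝ) :
    Matrix (Fin d) (Fin d) ℂ :=
  if hA : A.IsHermitian then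
    (hA.eigenvectorUnitary : Matrix (Fin d) (Fin d) ℂ) *
      Matrix.diagonal (fun i =>
        (((if hA.eigenvalues i = 0 then 0 else hA.eigenvalues i ^ α) : ℝ) : ℂ)) *
      star (hA.eigenvectorUnitary : Matrix (Fin d) (Fin d) ℂ)
  else 0

/-- Logarithm of a Hermitian matrix taken on its support (0 maps to 0). -/
noncomputable def mLog {d : ℕ} (A : Matrix (Fin d) (Fin d) ℂ) :
    Matrix (Fin d) (Fin d) ℂ :=
  if hA : A.IsHermitian then
    (hA.eigenvectorUnitary : Matrix (Fin d) (Fin d) ℂ) *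
      Matrix.diagonal (fun i => ((Real.log (hA.eigenvalues i) : ℝ) : ℂ)) *
      star (hA.eigenvectorUnitary : Matrix (Fin d) (Fin d) ℂ)
  else 0

/-- supp A ⊆ supp B : the range of A is contained in the range of B. -/
def suppLe {d : ℕ} (A B : Matrix (Fin d) (Fin d) ℂ) : Prop :=
  LinearMap.range (Matrix.toLin' A) ≤ LinearMap.range (Matrix.toLin' B)

/-! Write `x ^ α = α (1 - α) ∫₀^∞ min x s · s ^ (α - 2) ds` for `x ≥ 0`. Applied to the
eigenvalues, this reduces the claim to `Tr min(A + B, s) ≤ Tr min(A, s) + Tr min(B, s)` for every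
`s > 0`. Since `min x s = x - (x - s)⁺` and the trace is additive, this is the superadditivity of
`Tr (X - s)⁺`, which follows from Ky Fan's principle `Tr (X - s)⁺ = max_P Tr (X - s) P` over
orthogonal projections `P`: take `P` onto the span of the eigenvectors of `A` and of `B` with
eigenvalue above `s`. -/

open Module RCLike Set MeasureTheory

section KyFan

variable {𝕜 E : Type*} [RCLike 𝕜] [NormedAddCommGroup E] [InnerProductSpace 𝕜 E]
  {ι : Type*} [Fintype ι]

lemma re_trace_eq_sum_of_apply_eq_smul (b : OrthonormalBasis ι 𝕜 E) {T : E →ₗ[𝕜] E}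
    {μ : ι → ℝ} (hT : ∀ i, T (b i) = (μ i : 𝕜) • b i) :
    re (LinearMap.trace 𝕜 E T) = ∑ i, μ i := by
  rw [T.trace_eq_sum_inner b, map_sum]
  refine Finset.sum_congr rfl fun i _ => ?_
  rw [hT, inner_smul_right, inner_self_eq_norm_sq_to_K, b.orthonormal.1 i]
  simp

variable [FiniteDimensional 𝕜 E]

lemma Submodule.trace_starProjection (K : Submodule 𝕜 E) :
    LinearMap.trace 𝕜 E K.starProjection = finrank 𝕜 K := by
  show LinearMap.trace 𝕜 E (K.subtype ∘ₗ (K.orthogonalProjectionOnto : E →ₗ[𝕜] K)) = _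
  rw [LinearMap.trace_comp_comm', ← LinearMap.trace_id]
  congr 1
  ext v
  simp

lemma re_trace_starProjection_comp (K : Submodule 𝕜 E) (b : OrthonormalBasis ι 𝕜 E)
    {T : E →ₗ[𝕜] E} {μ : ι → ℝ} (hT : ∀ i, T (b i) = (μ i : 𝕜) • b i) :
    re (LinearMap.trace 𝕜 E (K.starProjection ∘ₗ T)) =
      ∑ i, μ i * ‖K.starProjection (b i)‖ ^ 2 := by
  rw [LinearMap.trace_eq_sum_inner _ b, map_sum]
  refine Finset.sum_congr rfl fun i _ => ?_
  rw [LinearMap.comp_apply, hT, map_smul, ContinuousLinearMap.coe_coe, inner_smul_right,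
    re_ofReal_mul, inner_re_symm, K.re_inner_starProjection_eq_normSq]
  rfl

lemma re_trace_starProjection_comp_sub_le (K : Submodule 𝕜 E) (b : OrthonormalBasis ι 𝕜 E)
    {T : E →ₗ[𝕜] E} {μ : ι → ℝ} (hT : ∀ i, T (b i) = (μ i : 𝕜) • b i) (t : ℝ) :
    re (LinearMap.trace 𝕜 E (K.starProjection ∘ₗ T)) - t * finrank 𝕜 K ≤
      ∑ i, max (μ i - t) 0 := by
  have hrank : (finrank 𝕜 K : ℝ) = ∑ i, ‖K.starProjection (b i)‖ ^ 2 := by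
    simpa [K.trace_starProjection] using
      re_trace_starProjection_comp K b (T := LinearMap.id) (μ := 1) (by simp)
  rw [re_trace_starProjection_comp K b hT, hrank, Finset.mul_sum, ← Finset.sum_sub_distrib]
  gcongr with i
  have hw : ‖K.starProjection (b i)‖ ^ 2 ≤ 1 := by
    simpa [b.orthonormal.1 i] using pow_le_pow_left₀ (norm_nonneg _)
      (K.norm_starProjection_apply_le (b i)) 2
  calc μ i * ‖K.starProjection (b i)‖ ^ 2 - t * ‖K.starProjection (b i)‖ ^ 2
      = (μ i - t) * ‖K.starProjection (b i)‖ ^ 2 := by ring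
    _ ≤ max (μ i - t) 0 * ‖K.starProjection (b i)‖ ^ 2 := by gcongr; exact le_max_left _ _
    _ ≤ max (μ i - t) 0 := mul_le_of_le_one_right (le_max_right _ _) hw

lemma sum_max_sub_add_card_le_re_trace_starProjection_comp (K : Submodule 𝕜 E)
    (b : OrthonormalBasis ι 𝕜 E) {T : E →ₗ[𝕜] E} {μ : ι → ℝ}
    (hT : ∀ i, T (b i) = (μ i : 𝕜) • b i) (hμ : ∀ i, 0 ≤ μ i) {t : ℝ}
    (hK : ∀ i, t < μ i → b i ∈ K) :
    ∑ i, max (μ i - t) 0 + t * Fintype.card {i // t < μ i} ≤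
      re (LinearMap.trace 𝕜 E (K.starProjection ∘ₗ T)) := by
  classical
  rw [re_trace_starProjection_comp K b hT, Fintype.card_subtype, Finset.card_filter,
    Nat.cast_sum, Finset.mul_sum, ← Finset.sum_add_distrib]
  gcongr with i
  by_cases hi : t < μ i
  · simp [hi, hi.le, K.starProjection_eq_self_iff.mpr (hK i hi), b.orthonormal.1 i]
  · simp [hi, not_lt.mp hi, mul_nonneg (hμ i) (sq_nonneg _)]

variable {ι₁ ι₂ : Type*} [Fintype ι₁] [Fintype ι₂] {b₁ : OrthonormalBasis ι₁ 𝕜 E}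
  {b₂ : OrthonormalBasis ι₂ 𝕜 E} {b : OrthonormalBasis ι 𝕜 E} {T₁ T₂ : E →ₗ[𝕜] E}
  {μ₁ : ι₁ → ℝ} {μ₂ : ι₂ → ℝ} {μ : ι → ℝ}

theorem sum_max_sub_add_sum_max_sub_le (h₁ : ∀ i, T₁ (b₁ i) = (μ₁ i : 𝕜) • b₁ i)
    (h₂ : ∀ i, T₂ (b₂ i) = (μ₂ i : 𝕜) • b₂ i) (h : ∀ i, (T₁ + T₂) (b i) = (μ i : 𝕜) • b i)
    (hμ₁ : ∀ i, 0 ≤ μ₁ i) (hμ₂ : ∀ i, 0 ≤ μ₂ i) {t : ℝ} (ht : 0 ≤ t) :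
    ∑ i, max (μ₁ i - t) 0 + ∑ i, max (μ₂ i - t) 0 ≤ ∑ i, max (μ i - t) 0 := by
  let v : {i // t < μ₁ i} ⊕ {i // t < μ₂ i} → E := Sum.elim (b₁ ·) (b₂ ·)
  let K := Submodule.span 𝕜 (range v)
  have hrank : finrank 𝕜 K ≤ Fintype.card {i // t < μ₁ i} + Fintype.card {i // t < μ₂ i} :=
    (finrank_range_le_card v).trans (Fintype.card_sum ..).le
  have hlow₁ := sum_max_sub_add_card_le_re_trace_starProjection_comp K b₁ h₁ hμ₁
    fun i hi => Submodule.subset_span ⟨.inl ⟨i, hi⟩, rfl⟩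
  have hlow₂ := sum_max_sub_add_card_le_re_trace_starProjection_comp K b₂ h₂ hμ₂
    fun i hi => Submodule.subset_span ⟨.inr ⟨i, hi⟩, rfl⟩
  have hup := re_trace_starProjection_comp_sub_le K b h t
  rw [LinearMap.comp_add, map_add, map_add] at hup
  have : t * finrank 𝕜 K ≤ t * (Fintype.card {i // t < μ₁ i} + Fintype.card {i // t < μ₂ i}) := by
    gcongr; exact_mod_cast hrank
  linarith

theorem sum_min_le_sum_min_add_sum_min (h₁ : ∀ i, T₁ (b₁ i) = (μ₁ i : 𝕜) • b₁ i)
    (h₂ : ∀ i, T₂ (b₂ i) = (μ₂ i : 𝕜) • b₂ i) (h : ∀ i, (T₁ + T₂) (b i) = (μ i : 𝕜) • b i)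
    (hμ₁ : ∀ i, 0 ≤ μ₁ i) (hμ₂ : ∀ i, 0 ≤ μ₂ i) {t : ℝ} (ht : 0 ≤ t) :
    ∑ i, min (μ i) t ≤ ∑ i, min (μ₁ i) t + ∑ i, min (μ₂ i) t := by
  have hmin (x : ℝ) : min x t = x - max (x - t) 0 := by
    rw [← min_sub_sub_left, sub_sub_cancel, sub_zero, min_comm]
  have hsum : ∑ i, μ i = ∑ i, μ₁ i + ∑ i, μ₂ i := by
    rw [← re_trace_eq_sum_of_apply_eq_smul b h, ← re_trace_eq_sum_of_apply_eq_smul b₁ h₁,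
      ← re_trace_eq_sum_of_apply_eq_smul b₂ h₂, map_add, map_add]
  simp only [hmin, Finset.sum_sub_distrib]
  linarith [sum_max_sub_add_sum_max_sub_le h₁ h₂ h hμ₁ hμ₂ ht]

end KyFan

section IntegralRepresentation

open Real

variable {α x : ℝ}

lemma min_mul_rpow_eqOn_Ioc :
    EqOn (fun s => min x s * s ^ (α - 2)) (fun s => s ^ (α - 1)) (Ioc 0 x) := fun s hs => by
  simp only [min_eq_right hs.2, show α - 1 = 1 + (α - 2) by ring, rpow_add hs.1, rpow_one]

lemma min_mul_rpow_eqOn_Ioi :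
    EqOn (fun s => min x s * s ^ (α - 2)) (fun s => x * s ^ (α - 2)) (Ioi x) := fun s hs => by
  simp only [min_eq_left (mem_Ioi.mp hs).le]

lemma integrableOn_min_mul_rpow (hα : α ∈ Ioo (0 : ℝ) 1) (hx : 0 ≤ x) :
    IntegrableOn (fun s => min x s * s ^ (α - 2)) (Ioi 0) := by
  rcases hx.eq_or_lt with rfl | hx
  · refine integrableOn_zero.congr_fun (fun s hs => ?_) measurableSet_Ioi
    simp [min_eq_left (mem_Ioi.mp hs).le]
  rw [← Ioc_union_Ioi_eq_Ioi hx.le]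
  refine IntegrableOn.union ?_ ?_
  · refine IntegrableOn.congr_fun ?_ min_mul_rpow_eqOn_Ioc.symm measurableSet_Ioc
    rw [← intervalIntegrable_iff_integrableOn_Ioc_of_le hx.le]
    exact intervalIntegral.intervalIntegrable_rpow' (by linarith [hα.1])
  · refine IntegrableOn.congr_fun ?_ min_mul_rpow_eqOn_Ioi.symm measurableSet_Ioi
    exact (integrableOn_Ioi_rpow_of_lt (by linarith [hα.2]) hx).const_mul x

lemma integral_min_mul_rpow (hα : α ∈ Ioo (0 : ℝ) 1) (hx : 0 ≤ x) :
    ∫ s in Ioi (0 : ℝ), min x s * s ^ (α - 2) = x ^ α / (α * (1 - α)) := by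
  have hint := integrableOn_min_mul_rpow hα hx
  obtain ⟨hα₀, hα₁⟩ := hα
  rcases hx.eq_or_lt with rfl | hx
  · rw [zero_rpow hα₀.ne', zero_div]
    exact setIntegral_eq_zero_of_forall_eq_zero fun s hs => by
      simp [min_eq_left (mem_Ioi.mp hs).le]
  rw [← Ioc_union_Ioi_eq_Ioi hx.le, setIntegral_union (Ioc_disjoint_Ioi le_rfl) measurableSet_Ioi
    (hint.mono_set Ioc_subset_Ioi_self) (hint.mono_set (Ioi_subset_Ioi hx.le)),
    setIntegral_congr_fun measurableSet_Ioc min_mul_rpow_eqOn_Ioc,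
    setIntegral_congr_fun measurableSet_Ioi min_mul_rpow_eqOn_Ioi,
    ← intervalIntegral.integral_of_le hx.le, integral_rpow (.inl (by linarith)),
    integral_const_mul, integral_Ioi_rpow_of_lt (by linarith) hx]
  rw [sub_add_cancel, zero_rpow hα₀.ne', show α - 2 + 1 = α - 1 by ring, rpow_sub_one hx.ne']
  field_simp [sub_ne_zero.2 hα₁.ne]
  ring

variable {ι : Type*} [Fintype ι] {μ : ι → ℝ}

lemma integrableOn_sum_min_mul_rpow (hα : α ∈ Ioo (0 : ℝ) 1) (hμ : ∀ i, 0 ≤ μ i) :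
    IntegrableOn (fun s => ∑ i, min (μ i) s * s ^ (α - 2)) (Ioi 0) :=
  integrable_finsetSum _ fun i _ => integrableOn_min_mul_rpow hα (hμ i)

lemma integral_sum_min_mul_rpow (hα : α ∈ Ioo (0 : ℝ) 1) (hμ : ∀ i, 0 ≤ μ i) :
    ∫ s in Ioi (0 : ℝ), ∑ i, min (μ i) s * s ^ (α - 2) = (∑ i, μ i ^ α) / (α * (1 - α)) := by
  rw [integral_finsetSum _ fun i _ => integrableOn_min_mul_rpow hα (hμ i), Finset.sum_div]
  exact Finset.sum_congr rfl fun i _ => integral_min_mul_rpow hα (hμ i)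

theorem sum_rpow_le_sum_rpow_add_sum_rpow {ι₁ ι₂ : Type*} [Fintype ι₁] [Fintype ι₂]
    {μ₁ : ι₁ → ℝ} {μ₂ : ι₂ → ℝ} (hα : α ∈ Ioo (0 : ℝ) 1) (hμ : ∀ i, 0 ≤ μ i)
    (hμ₁ : ∀ i, 0 ≤ μ₁ i) (hμ₂ : ∀ i, 0 ≤ μ₂ i)
    (hmin : ∀ t, 0 < t → ∑ i, min (μ i) t ≤ ∑ i, min (μ₁ i) t + ∑ i, min (μ₂ i) t) :
    ∑ i, μ i ^ α ≤ ∑ i, μ₁ i ^ α + ∑ i, μ₂ i ^ α := by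
  have hc : 0 < α * (1 - α) := mul_pos hα.1 (sub_pos.2 hα.2)
  rw [← div_le_div_iff_of_pos_right hc, add_div, ← integral_sum_min_mul_rpow hα hμ,
    ← integral_sum_min_mul_rpow hα hμ₁, ← integral_sum_min_mul_rpow hα hμ₂,
    ← integral_add (integrableOn_sum_min_mul_rpow hα hμ₁) (integrableOn_sum_min_mul_rpow hα hμ₂)]
  refine setIntegral_mono_on (integrableOn_sum_min_mul_rpow hα hμ)
    ((integrableOn_sum_min_mul_rpow hα hμ₁).add (integrableOn_sum_min_mul_rpow hα hμ₂))
    measurableSet_Ioi fun s hs => ?_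
  simp only [← Finset.sum_mul, ← add_mul]
  exact mul_le_mul_of_nonneg_right (hmin s hs) (rpow_nonneg (mem_Ioi.mp hs).le _)

end IntegralRepresentation

namespace Matrix.IsHermitian

variable {𝕜 n : Type*} [RCLike 𝕜] [Fintype n] [DecidableEq n] {A : Matrix n n 𝕜}

lemma toEuclideanLin_eigenvectorBasis (hA : A.IsHermitian) (i : n) :
    toEuclideanLin A (hA.eigenvectorBasis i) = (hA.eigenvalues i : 𝕜) • hA.eigenvectorBasis i := by
  rw [← RCLike.real_smul_eq_coe_smul (K := 𝕜)]
  exact congrArg (WithLp.toLp 2) (hA.mulVec_eigenvectorBasis i)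

end Matrix.IsHermitian

lemma re_trace_mPow {d : ℕ} {A : Matrix (Fin d) (Fin d) ℂ} (hA : A.IsHermitian) {α : ℝ}
    (hα : α ≠ 0) : (mPow A α).trace.re = ∑ i, hA.eigenvalues i ^ α := by
  rw [mPow, dif_pos hA, Matrix.trace_mul_cycle, Matrix.UnitaryGroup.star_mul_self,
    Matrix.one_mul, Matrix.trace_diagonal, Complex.re_sum]
  refine Finset.sum_congr rfl fun i _ => ?_
  split_ifs with h <;> simp [h, Real.zero_rpow hα]

theorem trace_rpow_add_le_general {d : ℕ} (A B : Matrix (Fin d) (Fin d) ℂ)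
    (hA : A.PosSemidef) (hB : B.PosSemidef) {α : ℝ} (hα : α ∈ Set.Ioo (0 : ℝ) 1) :
    ((mPow (A + B) α).trace).re ≤ ((mPow A α).trace).re + ((mPow B α).trace).re := by
  have hAB := hA.add hB
  rw [re_trace_mPow hAB.1 hα.1.ne', re_trace_mPow hA.1 hα.1.ne', re_trace_mPow hB.1 hα.1.ne']
  refine sum_rpow_le_sum_rpow_add_sum_rpow hα hAB.eigenvalues_nonneg hA.eigenvalues_nonneg
    hB.eigenvalues_nonneg fun t ht => ?_
  refine sum_min_le_sum_min_add_sum_min (b := hAB.1.eigenvectorBasis)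
    hA.1.toEuclideanLin_eigenvectorBasis hB.1.toEuclideanLin_eigenvectorBasis ?_
    hA.eigenvalues_nonneg hB.eigenvalues_nonneg ht.le
  simpa only [map_add] using hAB.1.toEuclideanLin_eigenvectorBasis

theorem trace_rpow_add_le {d : ℕ} (hd : 1 ≤ d) (A B : Matrix (Fin d) (Fin d) ℂ)
    (hA : A.PosSemidef) (hB : B.PosSemidef) {α : ℝ} (hα : α ∈ Set.Ioo (0 : ℝ) 1) :
    ((mPow (A + B) α).trace).re ≤ ((mPow A α).trace).re + ((mPow B α).trace).re :=
  trace_rpow_add_le_general A B hA hB hα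
end

section
/- Let ρ and σ be states (positive semidefinite d×d complex matrices of trace 1) with supp ρ ⊆ supp σ. Then Tr(ρ^{3/2} σ^{−1/2}) + Tr(ρ^{1/2} σ^{1/2}) ≥ 2; consequently κ := log(1 + Tr(ρ^{3/2} σ^{−1/2}) + Tr(ρ^{1/2} σ^{1/2})) ≥ log 3 > 1. -/
open scoped BigOperators ComplexOrder

/-!
Diagonalise ρ = ∑ aᵢ |uᵢ⟩⟨uᵢ| and σ = ∑ bⱼ |vⱼ⟩⟨vⱼ| and put wᵢⱼ = |⟨uᵢ, vⱼ⟩|². Then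
Tr(f(ρ) g(σ)) = ∑ᵢⱼ f(aᵢ) g(bⱼ) wᵢⱼ, and every row of (wᵢⱼ) sums to 1. For a, b > 0,
a^{3/2} b^{-1/2} + a^{1/2} b^{1/2} - 2a = a^{1/2} b^{-1/2} (a^{1/2} - b^{1/2})² ≥ 0, while the
support condition makes wᵢⱼ = 0 whenever bⱼ = 0 < aᵢ. Summing 2aᵢwᵢⱼ over i, j gives 2 Tr ρ = 2.
-/

open scoped InnerProductSpace

noncomputable def suppRpow (α x : ℝ) : ℝ := if x = 0 then 0 else x ^ α

theorem two_mul_le_rpow_add_rpow {x y : ℝ} (hx : 0 ≤ x) (hy : 0 < y) :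
    2 * x ≤ x ^ (3 / 2 : ℝ) * y ^ (-(1 / 2) : ℝ) + x ^ (1 / 2 : ℝ) * y ^ (1 / 2 : ℝ) := by
  set p := x ^ (1 / 2 : ℝ)
  set q := y ^ (1 / 2 : ℝ)
  have hq : 0 < q := Real.rpow_pos_of_pos hy _
  have hx2 : x = p ^ 2 := by
    rw [← Real.rpow_natCast, ← Real.rpow_mul hx]; norm_num
  have hx3 : x ^ (3 / 2 : ℝ) = p ^ 3 := by
    rw [← Real.rpow_natCast, ← Real.rpow_mul hx]; norm_num
  have hy' : y ^ (-(1 / 2) : ℝ) = q⁻¹ := Real.rpow_neg hy.le _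
  have hsq : 0 ≤ p * q⁻¹ * (p - q) ^ 2 := by positivity
  rw [hx3, hy', hx2]
  linear_combination hsq + (p * q - 2 * p ^ 2) * mul_inv_cancel₀ hq.ne'

theorem two_mul_le_suppRpow_add_suppRpow {x y : ℝ} (hx : 0 ≤ x) (hy : 0 ≤ y)
    (hxy : y = 0 → x = 0) :
    2 * x ≤ suppRpow (3 / 2) x * suppRpow (-(1 / 2)) y + suppRpow (1 / 2) x * suppRpow (1 / 2) y := by
  rcases eq_or_ne x 0 with rfl | hx0
  · simp [suppRpow]
  have hy0 : y ≠ 0 := mt hxy hx0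
  simp only [suppRpow, if_neg hx0, if_neg hy0]
  exact two_mul_le_rpow_add_rpow hx (lt_of_le_of_ne hy hy0.symm)

namespace Matrix

variable {𝕜 n : Type*} [RCLike 𝕜] [Fintype n] [DecidableEq n] {A B : Matrix n n 𝕜}

theorem trace_diagonal_mul_mul_diagonal_mul_star (F G : n → ℝ) (W : Matrix n n 𝕜) :
    (diagonal (RCLike.ofReal ∘ F) * W * diagonal (RCLike.ofReal ∘ G) * star W).trace =
      ∑ i, ∑ j, ((F i * G j * ‖W i j‖ ^ 2 : ℝ) : 𝕜) := by
  simp only [trace, diag, mul_apply (N := star W), mul_diagonal, diagonal_mul, star_apply,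
    Function.comp_apply]
  refine Finset.sum_congr rfl fun i _ => Finset.sum_congr rfl fun j _ => ?_
  push_cast
  rw [← RCLike.mul_conj, RCLike.star_def]
  ring

theorem PosSemidef.mulVec_eq_zero_of_range_le (hA : A.PosSemidef) (hB : B.IsHermitian)
    (hAB : LinearMap.range (toLin' A) ≤ LinearMap.range (toLin' B)) {v : n → 𝕜}
    (hv : B *ᵥ v = 0) : A *ᵥ v = 0 := by
  obtain ⟨w, hw⟩ := hAB ⟨v, toLin'_apply A v⟩
  rw [toLin'_apply] at hw
  rw [← hA.dotProduct_mulVec_zero_iff, ← hw, dotProduct_mulVec, ← hB.eq, ← star_mulVec, hv,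
    star_zero, zero_dotProduct]

namespace IsHermitian

theorem star_eigenvectorUnitary_mul_eigenvectorUnitary_apply
    (hA : A.IsHermitian) (hB : B.IsHermitian) (i j : n) :
    (star (hA.eigenvectorUnitary : Matrix n n 𝕜) * hB.eigenvectorUnitary) i j =
      ⟪hA.eigenvectorBasis i, hB.eigenvectorBasis j⟫_𝕜 := by
  simp [mul_apply, EuclideanSpace.inner_eq_star_dotProduct, dotProduct, mul_comm]

theorem trace_cfc_mul_cfc (hA : A.IsHermitian) (hB : B.IsHermitian) (f g : ℝ → ℝ) :
    (hA.cfc f * hB.cfc g).trace = ∑ i, ∑ j, ((f (hA.eigenvalues i) * g (hB.eigenvalues j) *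
      ‖⟪hA.eigenvectorBasis i, hB.eigenvectorBasis j⟫_𝕜‖ ^ 2 : ℝ) : 𝕜) := by
  set U : Matrix n n 𝕜 := (hA.eigenvectorUnitary : Matrix n n 𝕜)
  set W : Matrix n n 𝕜 := star U * (hB.eigenvectorUnitary : Matrix n n 𝕜)
  have hconj : hA.cfc f * hB.cfc g = U * (diagonal (RCLike.ofReal ∘ f ∘ hA.eigenvalues) * W *
      diagonal (RCLike.ofReal ∘ g ∘ hB.eigenvalues) * star W) * star U := by
    simp only [IsHermitian.cfc, Unitary.conjStarAlgAut_apply, W, U, star_mul, star_star,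
      mul_assoc, Unitary.mul_star_self_of_mem hA.eigenvectorUnitary.2, mul_one]
  rw [hconj, trace_mul_cycle, ← mul_assoc, Unitary.star_mul_self_of_mem hA.eigenvectorUnitary.2,
    one_mul, trace_diagonal_mul_mul_diagonal_mul_star]
  simp only [W, U, star_eigenvectorUnitary_mul_eigenvectorUnitary_apply, Function.comp_apply]

theorem sum_norm_inner_eigenvectorBasis_sq (hA : A.IsHermitian) (hB : B.IsHermitian) (i : n) :
    ∑ j, ‖⟪hA.eigenvectorBasis i, hB.eigenvectorBasis j⟫_𝕜‖ ^ 2 = 1 := by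
  rw [hB.eigenvectorBasis.sum_sq_norm_inner_left, hA.eigenvectorBasis.orthonormal.1 i, one_pow]

theorem eigenvalues_eq_zero_or_inner_eq_zero (hA : A.IsHermitian) (hB : B.IsHermitian)
    (i : n) {j : n} (hj : A *ᵥ hB.eigenvectorBasis j = 0) :
    hA.eigenvalues i = 0 ∨ ⟪hA.eigenvectorBasis i, hB.eigenvectorBasis j⟫_𝕜 = 0 := by
  have := isSymmetric_toEuclideanLin_iff.mpr hA (hA.eigenvectorBasis i) (hB.eigenvectorBasis j)
  simp only [toLpLin_apply, mulVec_eigenvectorBasis, hj, WithLp.toLp_zero, inner_zero_right] at this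
  rwa [RCLike.real_smul_eq_coe_smul (K := 𝕜), WithLp.toLp_smul, WithLp.toLp_ofLp,
    inner_smul_real_left, smul_eq_zero] at this

end IsHermitian

theorem PosSemidef.eigenvalues_eq_zero_or_inner_eq_zero_of_range_le (hA : A.PosSemidef)
    (hB : B.IsHermitian) (hAB : LinearMap.range (toLin' A) ≤ LinearMap.range (toLin' B))
    (i : n) {j : n} (hj : hB.eigenvalues j = 0) :
    hA.1.eigenvalues i = 0 ∨ ⟪hA.1.eigenvectorBasis i, hB.eigenvectorBasis j⟫_𝕜 = 0 :=
  hA.1.eigenvalues_eq_zero_or_inner_eq_zero hB i <| hA.mulVec_eq_zero_of_range_le hB hAB <| by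
    rw [hB.mulVec_eigenvectorBasis, hj, zero_smul]

theorem PosSemidef.two_le_re_trace_cfc_suppRpow (hA : A.PosSemidef) (hB : B.PosSemidef)
    (hA1 : A.trace = 1) (hAB : LinearMap.range (toLin' A) ≤ LinearMap.range (toLin' B)) :
    2 ≤ RCLike.re (hA.1.cfc (suppRpow (3 / 2)) * hB.1.cfc (suppRpow (-(1 / 2)))).trace +
      RCLike.re (hA.1.cfc (suppRpow (1 / 2)) * hB.1.cfc (suppRpow (1 / 2))).trace := by
  set a := hA.1.eigenvalues
  set b := hB.1.eigenvalues
  set w : n → n → ℝ := fun i j => ‖⟪hA.1.eigenvectorBasis i, hB.1.eigenvectorBasis j⟫_𝕜‖ ^ 2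
  have hsum_a : ∑ i, a i = 1 := by
    exact_mod_cast hA.1.trace_eq_sum_eigenvalues.symm.trans hA1
  have hpoint : ∀ i j, 2 * a i * w i j ≤ suppRpow (3 / 2) (a i) * suppRpow (-(1 / 2)) (b j) *
      w i j + suppRpow (1 / 2) (a i) * suppRpow (1 / 2) (b j) * w i j := by
    intro i j
    rcases eq_or_ne ⟪hA.1.eigenvectorBasis i, hB.1.eigenvectorBasis j⟫_𝕜 0 with hw | hw
    · simp [w, hw]
    rw [← add_mul]
    refine mul_le_mul_of_nonneg_right (two_mul_le_suppRpow_add_suppRpow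
      (hA.eigenvalues_nonneg i) (hB.eigenvalues_nonneg j) fun hb => ?_) (by positivity)
    exact (hA.eigenvalues_eq_zero_or_inner_eq_zero_of_range_le hB.1 hAB i hb).resolve_right hw
  rw [hA.1.trace_cfc_mul_cfc, hA.1.trace_cfc_mul_cfc]
  simp only [map_sum, RCLike.ofReal_re]
  calc (2 : ℝ) = ∑ i, ∑ j, 2 * a i * w i j := by
        simp only [← Finset.mul_sum, w, hA.1.sum_norm_inner_eigenvectorBasis_sq, hsum_a, mul_one]
    _ ≤ _ := by
        rw [← Finset.sum_add_distrib]
        gcongr with i _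
        rw [← Finset.sum_add_distrib]
        gcongr with j _
        exact hpoint i j

end Matrix

theorem mPow_eq_cfc {d : ℕ} {A : Matrix (Fin d) (Fin d) ℂ} (hA : A.IsHermitian) (α : ℝ) :
    mPow A α = hA.cfc (suppRpow α) := by
  rw [mPow, dif_pos hA]
  rfl

theorem kappa_gt_one_general {d : ℕ}
    (ρ σ : Matrix (Fin d) (Fin d) ℂ)
    (hρ : ρ.PosSemidef) (hσ : σ.PosSemidef)
    (hρ1 : ρ.trace = 1)
    (hsupp : suppLe ρ σ) :
    2 ≤ ((mPow ρ (3/2) * mPow σ (-(1/2))).trace).re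
          + ((mPow ρ (1/2) * mPow σ (1/2)).trace).re ∧
    Real.log 3 ≤ Real.log (1 + ((mPow ρ (3/2) * mPow σ (-(1/2))).trace).re
          + ((mPow ρ (1/2) * mPow σ (1/2)).trace).re) ∧
    1 < Real.log 3 := by
  have h := hρ.two_le_re_trace_cfc_suppRpow hσ hρ1 hsupp
  simp only [← mPow_eq_cfc, RCLike.re_to_complex] at h
  refine ⟨h, Real.log_le_log (by norm_num) (by linarith), ?_⟩
  exact (by norm_num : (1 : ℝ) < 1.0986122885).trans Real.log_three_gt_d9

theorem kappa_gt_one {d : ℕ} (hd : 1 ≤ d)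
    (ρ σ : Matrix (Fin d) (Fin d) ℂ)
    (hρ : ρ.PosSemidef) (hσ : σ.PosSemidef)
    (hρ1 : ρ.trace = 1) (hσ1 : σ.trace = 1)
    (hsupp : suppLe ρ σ) :
    2 ≤ ((mPow ρ (3/2) * mPow σ (-(1/2))).trace).re
          + ((mPow ρ (1/2) * mPow σ (1/2)).trace).re ∧
    Real.log 3 ≤ Real.log (1 + ((mPow ρ (3/2) * mPow σ (-(1/2))).trace).re
          + ((mPow ρ (1/2) * mPow σ (1/2)).trace).re) ∧
    1 < Real.log 3 :=
  kappa_gt_one_general ρ σ hρ hσ hρ1 hsupp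
end

section
/- Let ρ and σ be nonzero positive semidefinite d×d complex matrices with supp ρ ⊆ supp σ. Then the function α ↦ log Tr(ρ^α σ^{1−α}) is convex on ℝ. -/
open scoped BigOperators ComplexOrder

/-!
Diagonalising `ρ = ∑ₖ aₖ |uₖ⟩⟨uₖ|` and `σ = ∑ₗ bₗ |vₗ⟩⟨vₗ|` gives
`Tr(ρ^α σ^(1-α)) = ∑_{aₖ, bₗ > 0} bₗ |⟨uₖ, vₗ⟩|² exp (α (log aₖ - log bₗ))`,
a nonnegative combination of exponentials of `α`, and the logarithm of such a sum is convex by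
Hölder's inequality. The combination has a positive coefficient: otherwise `ρσ = 0`, so every
vector `ρx` lies in `supp σ ∩ ker σ = 0`.
-/

open Real Finset Matrix

theorem convexOn_log_sum_mul_exp {ι : Type*} [Fintype ι] (c r : ι → ℝ) (hc : ∀ i, 0 ≤ c i)
    (hc_pos : ∃ i, 0 < c i) :
    ConvexOn ℝ Set.univ (fun t => log (∑ i, c i * exp (r i * t))) := by
  have hS : ∀ t, 0 < ∑ i, c i * exp (r i * t) := fun t =>
    let ⟨i, hi⟩ := hc_pos
    sum_pos' (fun j _ => mul_nonneg (hc j) (exp_pos _).le) ⟨i, mem_univ _, by positivity⟩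
  refine convexOn_iff_forall_pos.2 ⟨convex_univ, fun x _ y _ p q hp hq hpq => ?_⟩
  set f : ℝ → ι → ℝ := fun t i => c i * exp (r i * t)
  have hf : ∀ t i, 0 ≤ f t i := fun t i => mul_nonneg (hc i) (exp_pos _).le
  have hsplit : ∀ i, f (p • x + q • y) i = f x i ^ p * f y i ^ q := fun i => by
    simp only [f, smul_eq_mul, mul_rpow (hc i) (exp_pos _).le, ← exp_mul]
    rw [mul_mul_mul_comm, ← rpow_add' (hc i) (by rw [hpq]; exact one_ne_zero), hpq, rpow_one,
      ← exp_add]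
    ring_nf
  have holder : ∑ i, f (p • x + q • y) i ≤ (∑ i, f x i) ^ p * (∑ i, f y i) ^ q := by
    simp only [hsplit]
    convert inner_le_Lp_mul_Lq_of_nonneg univ (HolderConjugate.inv_inv hp hq hpq)
      (fun i _ => rpow_nonneg (hf x i) p) (fun i _ => rpow_nonneg (hf y i) q) using 3 <;>
      simp [← rpow_mul (hf _ _), hp.ne', hq.ne']
  calc log (∑ i, f (p • x + q • y) i) ≤ log ((∑ i, f x i) ^ p * (∑ i, f y i) ^ q) :=
        log_le_log (hS _) holder
    _ = p • log (∑ i, f x i) + q • log (∑ i, f y i) := by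
        rw [log_mul (rpow_pos_of_pos (hS x) p).ne' (rpow_pos_of_pos (hS y) q).ne',
          log_rpow (hS x), log_rpow (hS y), smul_eq_mul, smul_eq_mul]

namespace Matrix

variable {n : Type*} [Fintype n] [DecidableEq n]

theorem trace_conj_diagonal_mul_conj_diagonal {R : Type*} [CommRing R] [StarRing R]
    (U V : Matrix n n R) (D E : n → R) :
    (U * diagonal D * star U * (V * diagonal E * star V)).trace =
      ∑ k, ∑ l, D k * E l * ((star U * V) k l * star ((star U * V) k l)) := by
  have hcycle : (U * diagonal D * star U * (V * diagonal E * star V)).trace =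
      (diagonal D * (star U * V) * diagonal E * star (star U * V)).trace := by
    rw [star_mul, star_star]
    simp only [Matrix.mul_assoc]
    rw [trace_mul_comm]
    simp only [Matrix.mul_assoc]
  rw [hcycle]
  generalize star U * V = P
  simp only [trace, diag_apply, mul_apply (M := diagonal D * P * diagonal E), mul_diagonal,
    diagonal_mul, star_apply]
  refine Finset.sum_congr rfl fun k _ => Finset.sum_congr rfl fun l _ => ?_
  ring

theorem eq_zero_of_mul_eq_zero_of_range_le {𝕜 : Type*} [RCLike 𝕜] {A B : Matrix n n 𝕜}
    (hB : B.IsHermitian) (hAB : LinearMap.range (toLin' A) ≤ LinearMap.range (toLin' B))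
    (hBA : B * A = 0) : A = 0 := by
  refine toLin'.injective (LinearMap.ext fun x => ?_)
  obtain ⟨y, hy⟩ := hAB (LinearMap.mem_range_self (toLin' A) x)
  simp only [toLin'_apply] at hy ⊢
  rw [zero_mulVec, ← dotProduct_star_self_eq_zero]
  calc star (A *ᵥ x) ⬝ᵥ A *ᵥ x = star (B *ᵥ y) ⬝ᵥ A *ᵥ x := by rw [hy]
    _ = star y ⬝ᵥ (B * A) *ᵥ x := by
        rw [star_mulVec, hB.eq, ← dotProduct_mulVec, mulVec_mulVec]
    _ = 0 := by rw [hBA, zero_mulVec, dotProduct_zero]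

namespace IsHermitian

variable {𝕜 : Type*} [RCLike 𝕜] {A B : Matrix n n 𝕜}

noncomputable def eigenbasisOverlap (hA : A.IsHermitian) (hB : B.IsHermitian) : Matrix n n 𝕜 :=
  star (hA.eigenvectorUnitary : Matrix n n 𝕜) * hB.eigenvectorUnitary

theorem exists_eigenvalue_ne_zero_eigenbasisOverlap_ne_zero (hA : A.IsHermitian)
    (hB : B.IsHermitian) (hAB : LinearMap.range (toLin' A) ≤ LinearMap.range (toLin' B))
    (hA0 : A ≠ 0) :
    ∃ k l, hA.eigenvalues k ≠ 0 ∧ hB.eigenvalues l ≠ 0 ∧ eigenbasisOverlap hA hB k l ≠ 0 := by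
  by_contra! h
  have hmid : diagonal (RCLike.ofReal ∘ hA.eigenvalues) * eigenbasisOverlap hA hB *
      diagonal (RCLike.ofReal ∘ hB.eigenvalues) = 0 := by
    ext k l
    simp only [mul_diagonal, diagonal_mul, Function.comp_apply, zero_apply]
    by_cases hk : hA.eigenvalues k = 0
    · simp [hk]
    by_cases hl : hB.eigenvalues l = 0
    · simp [hl]
    simp [h k l hk hl]
  have hAB0 : A * B = 0 := by
    calc A * B = (hA.eigenvectorUnitary : Matrix n n 𝕜) *
          (diagonal (RCLike.ofReal ∘ hA.eigenvalues) * eigenbasisOverlap hA hB *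
            diagonal (RCLike.ofReal ∘ hB.eigenvalues)) *
          star (hB.eigenvectorUnitary : Matrix n n 𝕜) := by
          conv_lhs => rw [hA.spectral_theorem, hB.spectral_theorem]
          simp only [Unitary.conjStarAlgAut_apply, eigenbasisOverlap, Matrix.mul_assoc]
      _ = 0 := by rw [hmid, mul_zero, zero_mul]
  refine hA0 (eq_zero_of_mul_eq_zero_of_range_le hB hAB ?_)
  simpa [hA.eq, hB.eq] using congrArg (fun M : Matrix n n 𝕜 => Mᴴ) hAB0

end IsHermitian

end Matrix

theorem mPow_of_isHermitian {d : ℕ} {A : Matrix (Fin d) (Fin d) ℂ} (hA : A.IsHermitian) (α : ℝ) :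
    mPow A α = (hA.eigenvectorUnitary : Matrix (Fin d) (Fin d) ℂ) *
      diagonal (fun i => (((if hA.eigenvalues i = 0 then 0 else hA.eigenvalues i ^ α) : ℝ) : ℂ)) *
      star (hA.eigenvectorUnitary : Matrix (Fin d) (Fin d) ℂ) :=
  dif_pos hA

theorem re_trace_mPow_mul_mPow {d : ℕ} {A B : Matrix (Fin d) (Fin d) ℂ} (hA : A.IsHermitian)
    (hB : B.IsHermitian) (α β : ℝ) :
    (mPow A α * mPow B β).trace.re = ∑ k, ∑ l,
      (if hA.eigenvalues k = 0 then 0 else hA.eigenvalues k ^ α) *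
      (if hB.eigenvalues l = 0 then 0 else hB.eigenvalues l ^ β) *
      Complex.normSq (hA.eigenbasisOverlap hB k l) := by
  rw [mPow_of_isHermitian hA, mPow_of_isHermitian hB, trace_conj_diagonal_mul_conj_diagonal]
  simp only [Complex.re_sum, Complex.star_def, Complex.mul_conj]
  norm_cast

theorem ite_rpow_mul_ite_rpow_one_sub {x y : ℝ} (hx : 0 ≤ x) (hy : 0 ≤ y) (α : ℝ) :
    (if x = 0 then 0 else x ^ α) * (if y = 0 then 0 else y ^ (1 - α)) =
      (if x = 0 ∨ y = 0 then 0 else y) * exp ((log x - log y) * α) := by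
  by_cases hx0 : x = 0
  · simp [hx0]
  by_cases hy0 : y = 0
  · simp [hy0]
  rw [if_neg hx0, if_neg hy0, if_neg (not_or.2 ⟨hx0, hy0⟩),
    rpow_def_of_pos (hx.lt_of_ne' hx0), rpow_def_of_pos (hy.lt_of_ne' hy0)]
  calc exp (log x * α) * exp (log y * (1 - α)) = exp (log y) * exp ((log x - log y) * α) := by
        rw [← exp_add, ← exp_add]
        ring_nf
    _ = y * exp ((log x - log y) * α) := by rw [exp_log (hy.lt_of_ne' hy0)]

theorem convexOn_log_trace_rpow_general {d : ℕ}
    (ρ σ : Matrix (Fin d) (Fin d) ℂ)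
    (hρ : ρ.PosSemidef) (hσ : σ.PosSemidef)
    (hρ0 : ρ ≠ 0)
    (hsupp : suppLe ρ σ) :
    ConvexOn ℝ Set.univ
      (fun α : ℝ => Real.log (((mPow ρ α * mPow σ (1 - α)).trace).re)) := by
  set a := hρ.1.eigenvalues
  set b := hσ.1.eigenvalues
  set c : Fin d × Fin d → ℝ := fun kl => (if a kl.1 = 0 ∨ b kl.2 = 0 then 0 else b kl.2) *
    Complex.normSq (hρ.1.eigenbasisOverlap hσ.1 kl.1 kl.2)
  have htrace : ∀ α, (mPow ρ α * mPow σ (1 - α)).trace.re =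
      ∑ kl, c kl * exp ((log (a kl.1) - log (b kl.2)) * α) := fun α => by
    rw [re_trace_mPow_mul_mPow hρ.1 hσ.1, ← Finset.univ_product_univ, Finset.sum_product]
    refine sum_congr rfl fun k _ => sum_congr rfl fun l _ => ?_
    rw [ite_rpow_mul_ite_rpow_one_sub (hρ.eigenvalues_nonneg k) (hσ.eigenvalues_nonneg l)]
    ring
  obtain ⟨k, l, hk, hl, hkl⟩ :=
    hρ.1.exists_eigenvalue_ne_zero_eigenbasisOverlap_ne_zero hσ.1 hsupp hρ0
  have hc : ∀ kl, 0 ≤ c kl := fun kl => by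
    refine mul_nonneg ?_ (Complex.normSq_nonneg _)
    split_ifs
    exacts [le_rfl, hσ.eigenvalues_nonneg _]
  have hc_pos : 0 < c (k, l) := by
    simp only [c]
    rw [if_neg (not_or.2 ⟨hk, hl⟩)]
    exact mul_pos ((hσ.eigenvalues_nonneg l).lt_of_ne' hl) (Complex.normSq_pos.2 hkl)
  simp_rw [htrace]
  exact convexOn_log_sum_mul_exp c _ hc ⟨_, hc_pos⟩

theorem convexOn_log_trace_rpow {d : ℕ} (hd : 1 ≤ d)
    (ρ σ : Matrix (Fin d) (Fin d) ℂ)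
    (hρ : ρ.PosSemidef) (hσ : σ.PosSemidef)
    (hρ0 : ρ ≠ 0) (hσ0 : σ ≠ 0)
    (hsupp : suppLe ρ σ) :
    ConvexOn ℝ Set.univ
      (fun α : ℝ => Real.log (((mPow ρ α * mPow σ (1 - α)).trace).re)) :=
  convexOn_log_trace_rpow_general ρ σ hρ hσ hρ0 hsupp
end

section
/- Let ρ and σ be states (positive semidefinite d×d complex matrices of trace 1) with supp ρ ⊆ supp σ. Define D_α(ρ‖σ) := (1/(α−1))·log Tr(ρ^α σ^{1−α}) for α ∈ (0,∞)\{1}, and D_1(ρ‖σ) := Tr(ρ(log ρ − log σ)). Then α ↦ D_α(ρ‖σ) is monotone increasing on (0,∞): for all 0 < α < β one has D_α(ρ‖σ) ≤ D_β(ρ‖σ). -/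
open scoped BigOperators ComplexOrder

/-- The old (Petz-type) Rényi α-divergence of states, with the Umegaki relative
entropy at α = 1. -/
noncomputable def DoldFull {d : ℕ} (ρ σ : Matrix (Fin d) (Fin d) ℂ) (α : ℝ) : ℝ :=
  if α = 1 then ((ρ * (mLog ρ - mLog σ)).trace).re
  else (α - 1)⁻¹ * Real.log (((mPow ρ α * mPow σ (1 - α)).trace).re)

/-!
Diagonalize `ρ = ∑ pᵢ uᵢ uᵢ*` and `σ = ∑ qⱼ vⱼ vⱼ*`. The Nussbaum–Szkoła weights
`w(i, j) = pᵢ |⟨uᵢ, vⱼ⟩|²` form a probability distribution (as `Tr ρ = 1`), and with the ratios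
`r(i, j) = pᵢ / qⱼ` one gets `Tr ρ^α σ^(1-α) = ∑ w r^(α-1)` and `Tr ρ (log ρ - log σ) = ∑ w log r`;
the support condition guarantees `qⱼ > 0` wherever `w(i, j) > 0`. So `D_α(ρ‖σ)` is the logarithm
of the `w`-weighted power mean of `r` with exponent `α - 1` (the geometric mean at `α = 1`), which
is monotone in the exponent by the power mean inequality and Jensen's inequality for `log`.
-/

open Finset

namespace Real

variable {ι : Type*} {s : Finset ι} {w r : ι → ℝ} {t u : ℝ}

/-- `log` of the weighted power mean `(∑ w r ^ t) ^ (1 / t)`, with the geometric mean at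
`t = 0`. -/
noncomputable def logPowerMean (s : Finset ι) (w r : ι → ℝ) (t : ℝ) : ℝ :=
  if t = 0 then ∑ x ∈ s, w x * log (r x) else t⁻¹ * log (∑ x ∈ s, w x * r x ^ t)

lemma logPowerMean_zero : logPowerMean s w r 0 = ∑ x ∈ s, w x * log (r x) := if_pos rfl

lemma logPowerMean_of_ne_zero (ht : t ≠ 0) :
    logPowerMean s w r t = t⁻¹ * log (∑ x ∈ s, w x * r x ^ t) := if_neg ht

lemma logPowerMean_filter_ne_zero :
    logPowerMean {x ∈ s | w x ≠ 0} w r = logPowerMean s w r := by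
  have (f : ι → ℝ) : ∑ x ∈ s with w x ≠ 0, w x * f x = ∑ x ∈ s, w x * f x :=
    sum_filter_of_ne fun _ _ => left_ne_zero_of_mul
  ext t
  simp only [logPowerMean, this]

section Positive

variable (hw : ∀ x ∈ s, 0 ≤ w x) (hw1 : ∑ x ∈ s, w x = 1) (hr : ∀ x ∈ s, 0 < r x)
include hw hw1 hr

lemma sum_mul_rpow_pos (t : ℝ) : 0 < ∑ x ∈ s, w x * r x ^ t := by
  obtain ⟨x, hx, hwx⟩ := exists_ne_zero_of_sum_ne_zero (hw1.trans_ne one_ne_zero)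
  exact sum_pos' (fun y hy => mul_nonneg (hw y hy) (rpow_pos_of_pos (hr y hy) t).le)
    ⟨x, hx, mul_pos ((hw x hx).lt_of_ne' hwx) (rpow_pos_of_pos (hr x hx) t)⟩

lemma mul_sum_mul_log_le_log_sum_mul_rpow (u : ℝ) :
    u * ∑ x ∈ s, w x * log (r x) ≤ log (∑ x ∈ s, w x * r x ^ u) := by
  have := strictConcaveOn_log_Ioi.concaveOn.le_map_sum hw hw1
    (fun x hx => Set.mem_Ioi.mpr (rpow_pos_of_pos (hr x hx) u))
  simp only [smul_eq_mul] at this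
  rwa [mul_sum, sum_congr rfl fun x hx => by rw [mul_left_comm, ← log_rpow (hr x hx)]]

/-- The power mean inequality, in logarithmic form. -/
lemma div_mul_log_sum_mul_rpow_le (ht : t ≠ 0) (htu : 1 ≤ u / t) :
    u / t * log (∑ x ∈ s, w x * r x ^ t) ≤ log (∑ x ∈ s, w x * r x ^ u) := by
  have hpow : (∑ x ∈ s, w x * r x ^ t) ^ (u / t) ≤ ∑ x ∈ s, w x * r x ^ u := by
    refine (rpow_arith_mean_le_arith_mean_rpow s w (r · ^ t) hw hw1
      (fun x hx => (rpow_pos_of_pos (hr x hx) t).le) htu).trans_eq (sum_congr rfl fun x hx => ?_)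
    rw [← rpow_mul (hr x hx).le, mul_div_cancel₀ u ht]
  rw [← log_rpow (sum_mul_rpow_pos hw hw1 hr t)]
  exact log_le_log (rpow_pos_of_pos (sum_mul_rpow_pos hw hw1 hr t) _) hpow

lemma logPowerMean_le_logPowerMean_zero (hu : u ≤ 0) :
    logPowerMean s w r u ≤ logPowerMean s w r 0 := by
  rcases hu.lt_or_eq with hu | rfl
  · have h := mul_le_mul_of_nonpos_left (mul_sum_mul_log_le_log_sum_mul_rpow hw hw1 hr u)
      (inv_nonpos.2 hu.le)
    rwa [inv_mul_cancel_left₀ hu.ne, ← logPowerMean_zero, ← logPowerMean_of_ne_zero hu.ne] at h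
  · rfl

lemma logPowerMean_zero_le_logPowerMean (hu : 0 ≤ u) :
    logPowerMean s w r 0 ≤ logPowerMean s w r u := by
  rcases hu.lt_or_eq with hu | rfl
  · rw [logPowerMean_of_ne_zero hu.ne', logPowerMean_zero, le_inv_mul_iff₀ hu]
    exact mul_sum_mul_log_le_log_sum_mul_rpow hw hw1 hr u
  · rfl

lemma logPowerMean_le_of_pos (ht : 0 < t) (htu : t ≤ u) :
    logPowerMean s w r t ≤ logPowerMean s w r u := by
  have hu := ht.trans_le htu
  have h := div_mul_log_sum_mul_rpow_le hw hw1 hr ht.ne' ((one_le_div ht).2 htu)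
  rw [logPowerMean_of_ne_zero ht.ne', logPowerMean_of_ne_zero hu.ne']
  calc t⁻¹ * log (∑ x ∈ s, w x * r x ^ t)
      = u⁻¹ * (u / t * log (∑ x ∈ s, w x * r x ^ t)) := by field_simp
    _ ≤ u⁻¹ * log (∑ x ∈ s, w x * r x ^ u) := by gcongr

lemma logPowerMean_le_of_neg (htu : t ≤ u) (hu : u < 0) :
    logPowerMean s w r t ≤ logPowerMean s w r u := by
  have ht := htu.trans_lt hu
  have h := div_mul_log_sum_mul_rpow_le hw hw1 hr hu.ne ((one_le_div_of_neg hu).2 htu)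
  rw [logPowerMean_of_ne_zero ht.ne, logPowerMean_of_ne_zero hu.ne]
  calc t⁻¹ * log (∑ x ∈ s, w x * r x ^ t)
      ≤ t⁻¹ * (t / u * log (∑ x ∈ s, w x * r x ^ u)) :=
        mul_le_mul_of_nonpos_left h (inv_nonpos.2 ht.le)
    _ = u⁻¹ * log (∑ x ∈ s, w x * r x ^ u) := by field_simp [ht.ne]

lemma monotone_logPowerMean_of_pos : Monotone (logPowerMean s w r) := by
  intro t u htu
  rcases lt_or_ge 0 t with ht | ht
  · exact logPowerMean_le_of_pos hw hw1 hr ht htu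
  rcases lt_or_ge u 0 with hu | hu
  · exact logPowerMean_le_of_neg hw hw1 hr htu hu
  exact (logPowerMean_le_logPowerMean_zero hw hw1 hr ht).trans
    (logPowerMean_zero_le_logPowerMean hw hw1 hr hu)

end Positive

theorem monotone_logPowerMean (hw : ∀ x ∈ s, 0 ≤ w x) (hw1 : ∑ x ∈ s, w x = 1)
    (hr : ∀ x ∈ s, w x ≠ 0 → 0 < r x) : Monotone (logPowerMean s w r) := by
  rw [← logPowerMean_filter_ne_zero]
  refine monotone_logPowerMean_of_pos (fun x hx => hw x (mem_filter.1 hx).1) ?_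
    (fun x hx => hr x (mem_filter.1 hx).1 (mem_filter.1 hx).2)
  rwa [sum_filter_ne_zero]

end Real

namespace Matrix

variable {n : Type*} [Fintype n] [DecidableEq n]

lemma sum_normSq_apply_of_mem_unitaryGroup {W : Matrix n n ℂ} (hW : W ∈ unitaryGroup n ℂ)
    (i : n) : ∑ j, Complex.normSq (W i j) = 1 := by
  have h := congr_fun₂ (mem_unitaryGroup_iff.1 hW) i i
  simp only [mul_apply, star_apply, Complex.star_def, Complex.mul_conj, one_apply_eq] at h
  exact_mod_cast h

namespace IsHermitian

variable {A B : Matrix n n ℂ} (hA : A.IsHermitian) (hB : B.IsHermitian)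

/-- `|⟨uᵢ, vⱼ⟩|²` for the eigenvector bases `u` of `A` and `v` of `B`. -/
noncomputable def eigenOverlap (i j : n) : ℝ :=
  Complex.normSq ((star (hA.eigenvectorUnitary : Matrix n n ℂ) * hB.eigenvectorUnitary) i j)

lemma sum_eigenOverlap (i : n) : ∑ j, hA.eigenOverlap hB i j = 1 :=
  sum_normSq_apply_of_mem_unitaryGroup
    (star hA.eigenvectorUnitary * hB.eigenvectorUnitary : unitaryGroup n ℂ).2 i

lemma eigenOverlap_self (i j : n) : hA.eigenOverlap hA i j = if i = j then 1 else 0 := by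
  rw [eigenOverlap, Unitary.star_mul_self_of_mem hA.eigenvectorUnitary.2, one_apply]
  split_ifs <;> simp

lemma re_trace_cfc_mul_cfc (f g : ℝ → ℝ) :
    ((hA.cfc f * hB.cfc g).trace).re =
      ∑ i, ∑ j, f (hA.eigenvalues i) * g (hB.eigenvalues j) * hA.eigenOverlap hB i j := by
  set U : Matrix n n ℂ := ↑hA.eigenvectorUnitary
  set V : Matrix n n ℂ := ↑hB.eigenvectorUnitary
  have hcyc : (hA.cfc f * hB.cfc g).trace = (diagonal (fun i => (f (hA.eigenvalues i) : ℂ)) *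
      (star U * V) * diagonal (fun j => (g (hB.eigenvalues j) : ℂ)) * star (star U * V)).trace := by
    simp only [IsHermitian.cfc, Unitary.conjStarAlgAut_apply, star_mul, star_star, Matrix.mul_assoc]
    rw [trace_mul_comm]
    simp only [Matrix.mul_assoc]
    rfl
  rw [hcyc, trace, Complex.re_sum]
  refine sum_congr rfl fun i _ => ?_
  rw [diag_apply, mul_apply, Complex.re_sum]
  refine sum_congr rfl fun j _ => ?_
  rw [mul_diagonal, diagonal_mul, star_apply, Complex.star_def, eigenOverlap, ← Complex.ofReal_re
    (_ * _ * _), Complex.ofReal_mul, Complex.ofReal_mul, ← Complex.mul_conj]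
  exact congrArg Complex.re (by ring)

lemma re_trace_mul_cfc (g : ℝ → ℝ) :
    ((A * hB.cfc g).trace).re =
      ∑ i, ∑ j, hA.eigenvalues i * g (hB.eigenvalues j) * hA.eigenOverlap hB i j := by
  conv_lhs => rw [hA.spectral_theorem]
  exact hA.re_trace_cfc_mul_cfc hB id g

lemma star_eigenvectorUnitary_mul_apply (i j : n) :
    (star (hA.eigenvectorUnitary : Matrix n n ℂ) * hB.eigenvectorUnitary) i j =
      star ⇑(hA.eigenvectorBasis i) ⬝ᵥ ⇑(hB.eigenvectorBasis j) := by
  simp [mul_apply, dotProduct, star_apply]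

/-- An eigenvector of `A` with nonzero eigenvalue lies in the range of `A`, hence in that of `B`,
which is orthogonal to the kernel of `B`. -/
lemma eigenOverlap_eq_zero_of_range_le
    (hAB : LinearMap.range (toLin' A) ≤ LinearMap.range (toLin' B)) {i j : n}
    (hi : hA.eigenvalues i ≠ 0) (hj : hB.eigenvalues j = 0) :
    hA.eigenOverlap hB i j = 0 := by
  have hu : ⇑(hA.eigenvectorBasis i) ∈ LinearMap.range (toLin' A) := by
    refine ⟨(hA.eigenvalues i : ℂ)⁻¹ • ⇑(hA.eigenvectorBasis i), ?_⟩
    rw [toLin'_apply, mulVec_smul, mulVec_eigenvectorBasis, ← Complex.coe_smul, smul_smul,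
      inv_mul_cancel₀ (Complex.ofReal_ne_zero.2 hi), one_smul]
  obtain ⟨y, hy⟩ := hAB hu
  rw [eigenOverlap, Complex.normSq_eq_zero, star_eigenvectorUnitary_mul_apply, ← hy, toLin'_apply,
    star_mulVec, ← dotProduct_mulVec, hB.eq, mulVec_eigenvectorBasis, hj, zero_smul,
    dotProduct_zero]

/-- The Nussbaum–Szkoła distribution `(i, j) ↦ aᵢ |⟨uᵢ, vⱼ⟩|²`: with the likelihood ratio
`eigenvalueRatio`, it turns the Petz divergences of `A` and `B` into classical ones. -/
noncomputable def nussbaumSzkola (x : n × n) : ℝ :=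
  hA.eigenvalues x.1 * hA.eigenOverlap hB x.1 x.2

noncomputable def eigenvalueRatio (x : n × n) : ℝ := hA.eigenvalues x.1 / hB.eigenvalues x.2

lemma sum_nussbaumSzkola : ∑ x, hA.nussbaumSzkola hB x = A.trace.re := by
  simp [nussbaumSzkola, Fintype.sum_prod_type, ← mul_sum, sum_eigenOverlap,
    hA.trace_eq_sum_eigenvalues]

end IsHermitian

end Matrix

namespace Matrix.PosSemidef

variable {n : Type*} [Fintype n] [DecidableEq n] {A B : Matrix n n ℂ}

lemma nussbaumSzkola_nonneg (hA : A.PosSemidef) (hB : B.IsHermitian) (x : n × n) :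
    0 ≤ hA.1.nussbaumSzkola hB x :=
  mul_nonneg (hA.eigenvalues_nonneg _) (Complex.normSq_nonneg _)

lemma eigenvalues_pos_of_nussbaumSzkola_ne_zero (hA : A.PosSemidef) (hB : B.PosSemidef)
    (hAB : LinearMap.range (toLin' A) ≤ LinearMap.range (toLin' B)) {x : n × n}
    (hx : hA.1.nussbaumSzkola hB.1 x ≠ 0) :
    0 < hA.1.eigenvalues x.1 ∧ 0 < hB.1.eigenvalues x.2 := by
  obtain ⟨ha, hO⟩ := mul_ne_zero_iff.1 hx
  exact ⟨(hA.eigenvalues_nonneg _).lt_of_ne' ha, (hB.eigenvalues_nonneg _).lt_of_ne'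
    fun hb => hO (hA.1.eigenOverlap_eq_zero_of_range_le hB.1 hAB ha hb)⟩

end Matrix.PosSemidef

open Matrix

variable {d : ℕ} {ρ σ : Matrix (Fin d) (Fin d) ℂ}

lemma Matrix.IsHermitian.mPow_eq_cfc (hρ : ρ.IsHermitian) (γ : ℝ) :
    mPow ρ γ = hρ.cfc (fun x => if x = 0 then 0 else x ^ γ) := by
  rw [mPow, dif_pos hρ]; rfl

lemma Matrix.IsHermitian.mLog_eq_cfc (hρ : ρ.IsHermitian) : mLog ρ = hρ.cfc Real.log := by
  rw [mLog, dif_pos hρ]; rfl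

section Petz

variable (hρ : ρ.PosSemidef) (hσ : σ.PosSemidef) (hsupp : suppLe ρ σ)
include hρ hσ hsupp

lemma re_trace_mPow_mul_mPow_s4 (γ : ℝ) :
    ((mPow ρ γ * mPow σ (1 - γ)).trace).re =
      ∑ x, hρ.1.nussbaumSzkola hσ.1 x * hρ.1.eigenvalueRatio hσ.1 x ^ (γ - 1) := by
  rw [hρ.1.mPow_eq_cfc, hσ.1.mPow_eq_cfc, IsHermitian.re_trace_cfc_mul_cfc,
    ← Fintype.sum_prod_type']
  refine sum_congr rfl fun x _ => ?_
  by_cases hx : hρ.1.nussbaumSzkola hσ.1 x = 0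
  · rw [hx, zero_mul]
    rcases mul_eq_zero.1 hx with hp | hO
    · simp [hp]
    · simp [hO]
  obtain ⟨hp, hq⟩ := hρ.eigenvalues_pos_of_nussbaumSzkola_ne_zero hσ hsupp hx
  simp only [IsHermitian.nussbaumSzkola, IsHermitian.eigenvalueRatio, if_neg hp.ne', if_neg hq.ne']
  rw [Real.div_rpow hp.le hq.le, Real.rpow_sub_one hp.ne', Real.rpow_sub hq, Real.rpow_sub hq,
    Real.rpow_one]
  field_simp

lemma re_trace_mul_mLog_sub_mLog :
    ((ρ * (mLog ρ - mLog σ)).trace).re =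
      ∑ x, hρ.1.nussbaumSzkola hσ.1 x * Real.log (hρ.1.eigenvalueRatio hσ.1 x) := by
  have hself : ∑ i, ∑ j, hρ.1.eigenvalues i * Real.log (hρ.1.eigenvalues j) *
      hρ.1.eigenOverlap hρ.1 i j =
      ∑ i, ∑ j, hρ.1.eigenvalues i * Real.log (hρ.1.eigenvalues i) *
        hρ.1.eigenOverlap hσ.1 i j := by
    simp [IsHermitian.eigenOverlap_self, ← mul_sum, IsHermitian.sum_eigenOverlap]
  rw [mul_sub, trace_sub, Complex.sub_re, hρ.1.mLog_eq_cfc, hσ.1.mLog_eq_cfc,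
    hρ.1.re_trace_mul_cfc, hρ.1.re_trace_mul_cfc, hself]
  simp only [← sum_sub_distrib]
  rw [← Fintype.sum_prod_type']
  refine sum_congr rfl fun x _ => ?_
  by_cases hx : hρ.1.nussbaumSzkola hσ.1 x = 0
  · rw [hx, zero_mul]
    rcases mul_eq_zero.1 hx with hp | hO
    · simp [hp]
    · simp [hO]
  obtain ⟨hp, hq⟩ := hρ.eigenvalues_pos_of_nussbaumSzkola_ne_zero hσ hsupp hx
  simp only [IsHermitian.nussbaumSzkola, IsHermitian.eigenvalueRatio, Real.log_div hp.ne' hq.ne']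
  ring

lemma DoldFull_eq_logPowerMean (γ : ℝ) :
    DoldFull ρ σ γ = Real.logPowerMean univ (hρ.1.nussbaumSzkola hσ.1)
      (hρ.1.eigenvalueRatio hσ.1) (γ - 1) := by
  rcases eq_or_ne γ 1 with rfl | hγ
  · rw [DoldFull, if_pos rfl, sub_self, Real.logPowerMean_zero,
      re_trace_mul_mLog_sub_mLog hρ hσ hsupp]
  · rw [DoldFull, if_neg hγ, Real.logPowerMean_of_ne_zero (sub_ne_zero.2 hγ),
      re_trace_mPow_mul_mPow_s4 hρ hσ hsupp]

end Petz

theorem Dold_monotone_general {d : ℕ}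
    (ρ σ : Matrix (Fin d) (Fin d) ℂ)
    (hρ : ρ.PosSemidef) (hσ : σ.PosSemidef)
    (hρ1 : ρ.trace = 1)
    (hsupp : suppLe ρ σ) :
    ∀ α β : ℝ, 0 < α → α < β → DoldFull ρ σ α ≤ DoldFull ρ σ β := by
  intro α β _ hαβ
  have hmono := Real.monotone_logPowerMean (fun x _ => hρ.nussbaumSzkola_nonneg hσ.1 x)
    (by rw [hρ.1.sum_nussbaumSzkola, hρ1, Complex.one_re])
    (fun x _ hx => (hρ.eigenvalues_pos_of_nussbaumSzkola_ne_zero hσ hsupp hx).elim div_pos)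
  rw [DoldFull_eq_logPowerMean hρ hσ hsupp, DoldFull_eq_logPowerMean hρ hσ hsupp]
  exact hmono (by linarith)

theorem Dold_monotone {d : ℕ} (hd : 1 ≤ d)
    (ρ σ : Matrix (Fin d) (Fin d) ℂ)
    (hρ : ρ.PosSemidef) (hσ : σ.PosSemidef)
    (hρ1 : ρ.trace = 1) (hσ1 : σ.trace = 1)
    (hsupp : suppLe ρ σ) :
    ∀ α β : ℝ, 0 < α → α < β → DoldFull ρ σ α ≤ DoldFull ρ σ β :=
  Dold_monotone_general ρ σ hρ hσ hρ1 hsupp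
end

section
/- Let ρ_1, …, ρ_r be states (positive semidefinite d×d complex matrices of trace 1), let σ be a nonzero positive semidefinite d×d matrix, let γ_1, …, γ_r be a probability distribution (γ_i ≥ 0, Σ_i γ_i = 1), and let α ∈ (0,1). Then Σ_i γ_i · Q_α^new(ρ_i‖σ) ≤ Q_α^new(Σ_i γ_i ρ_i‖σ) ≤ Σ_i γ_i^α · Q_α^new(ρ_i‖σ). -/
open scoped BigOperators ComplexOrder

/-- The core quantity of the new (sandwiched) Rényi α-divergence. -/
noncomputable def Qnew {d : ℕ} (ρ σ : Matrix (Fin d) (Fin d) ℂ) (α : ℝ) : ℝ :=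
  ((mPow (mPow σ ((1 - α)/(2*α)) * ρ * mPow σ ((1 - α)/(2*α))) α).trace).re

/-!
Write `S = σ ^ ((1 - α) / (2α))`. For positive semidefinite `ρ` the matrix `S ρ S` is positive
semidefinite and `Qnew ρ σ α = Tr (S ρ S) ^ α`; since `ρ ↦ S ρ S` is linear, both bounds are
statements about `A ↦ Tr A ^ α` on positive semidefinite matrices.

The lower bound is operator concavity of `A ↦ A ^ α` followed by the monotone linear map `Tr`.
The upper bound is homogeneity `Tr (γ A) ^ α = γ ^ α Tr A ^ α` together with subadditivity
`Tr (A + B) ^ α ≤ Tr A ^ α + Tr B ^ α`. For the latter, integrate against the representation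
`x ^ α = c ∫₀^∞ t ^ (α - 1) x / (t + x) dt`: for each `t > 0`, inversion is operator antitone, so
`Tr (A + B)(t + A + B)⁻¹ = Tr A (t + A + B)⁻¹ + Tr B (t + A + B)⁻¹`
`                       ≤ Tr A (t + A)⁻¹ + Tr B (t + B)⁻¹`.
-/

open scoped Matrix.Norms.L2Operator MatrixOrder
open Set MeasureTheory Real

section CStarAlgebra

variable {A : Type*} [CStarAlgebra A] [PartialOrder A] [StarOrderedRing A]

lemma cfc_rpowIntegrand₀₁_eq_smul_mul_ringInverse {p t : ℝ} (hp : p ∈ Ioo 0 1) (ht : 0 < t)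
    {a : A} (ha : 0 ≤ a) :
    cfc (rpowIntegrand₀₁ p t) a = t ^ (p - 1) • (a * Ring.inverse (algebraMap ℝ A t + a)) := by
  have hspec : ∀ x ∈ spectrum ℝ a, 0 ≤ x := fun x hx => spectrum_nonneg_of_nonneg ha hx
  have hne : ∀ x ∈ spectrum ℝ a, t + x ≠ 0 := fun x hx => by linarith [hspec x hx]
  have hinv : ContinuousOn (fun x : ℝ => (t + x)⁻¹) (spectrum ℝ a) :=
    ContinuousOn.inv₀ (by fun_prop) hne
  calc cfc (rpowIntegrand₀₁ p t) a = cfc (fun x => t ^ (p - 1) * (x * (t + x)⁻¹)) a := by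
        refine cfc_congr fun x hx => ?_
        rw [rpowIntegrand₀₁_eq_pow_div hp ht.le (hspec x hx), mul_div_assoc, div_eq_mul_inv]
    _ = t ^ (p - 1) • (a * Ring.inverse (algebraMap ℝ A t + a)) := by
        rw [cfc_const_mul _ (fun x => x * (t + x)⁻¹) a (continuousOn_id.mul hinv),
          cfc_mul _ _ a (by fun_prop) hinv, cfc_id' ℝ a, cfc_inv (fun x => t + x) a hne,
          cfc_const_add _ _ a, cfc_id' ℝ a]

lemma CFC.smul_rpow {c : ℝ} (hc : 0 ≤ c) {a : A} (ha : 0 ≤ a) {p : ℝ} (hp : 0 ≤ p) :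
    (c • a) ^ p = c ^ p • a ^ p := by
  have hspec : ∀ x ∈ spectrum ℝ a, 0 ≤ x := fun x hx => spectrum_nonneg_of_nonneg ha hx
  rw [CFC.rpow_eq_cfc_real (smul_nonneg hc ha), CFC.rpow_eq_cfc_real ha,
    ← cfc_comp_smul c _ a (Real.continuous_rpow_const hp).continuousOn,
    ← cfc_const_mul _ _ a (Real.continuous_rpow_const hp).continuousOn]
  refine cfc_congr fun x hx => ?_
  rw [smul_eq_mul, Real.mul_rpow hc (hspec x hx)]

end CStarAlgebra

namespace Matrix

variable {n : Type*} [Fintype n] [DecidableEq n]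

lemma IsHermitian.re_trace_cfc {A : Matrix n n ℂ} (hA : A.IsHermitian) (f : ℝ → ℝ) :
    (cfc f A).trace.re = ∑ i, f (hA.eigenvalues i) := by
  rw [hA.cfc_eq, IsHermitian.cfc, Unitary.conjStarAlgAut_apply, trace_mul_cycle,
    Unitary.coe_star_mul_self, one_mul, trace_diagonal, Complex.re_sum]
  rfl

omit [DecidableEq n] in
lemma re_trace_mono {A B : Matrix n n ℂ} (h : A ≤ B) : A.trace.re ≤ B.trace.re := by
  have := (Complex.nonneg_iff.mp (le_iff.mp h).trace_nonneg).1
  rwa [trace_sub, Complex.sub_re, sub_nonneg] at this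

lemma trace_mul_nonneg {A P : Matrix n n ℂ} (hA : 0 ≤ A) (hP : 0 ≤ P) : 0 ≤ (A * P).trace := by
  rw [← CFC.sqrt_mul_sqrt_self A, trace_mul_cycle, trace_mul_cycle]
  exact (nonneg_iff_posSemidef.mp
    (conjugate_nonneg_of_nonneg hP (CFC.sqrt_nonneg A))).trace_nonneg

lemma re_trace_mul_mono {A P Q : Matrix n n ℂ} (hA : 0 ≤ A) (hPQ : P ≤ Q) :
    (A * P).trace.re ≤ (A * Q).trace.re := by
  have := (Complex.nonneg_iff.mp (trace_mul_nonneg hA (sub_nonneg.mpr hPQ))).1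
  rwa [Matrix.mul_sub, trace_sub, Complex.sub_re, sub_nonneg] at this

lemma re_trace_mul_ringInverse_add_le {A B : Matrix n n ℂ} (hA : 0 ≤ A) (hB : 0 ≤ B) {t : ℝ}
    (ht : 0 < t) :
    (A * Ring.inverse (algebraMap ℝ _ t + (A + B))).trace.re ≤
      (A * Ring.inverse (algebraMap ℝ _ t + A)).trace.re := by
  have hpos : IsStrictlyPositive (algebraMap ℝ (Matrix n n ℂ) t + A) :=
    (isStrictlyPositive_algebraMap ht).add_nonneg hA
  refine re_trace_mul_mono hA (CStarAlgebra.ringInverse_le_ringInverse ?_ hpos)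
  rw [← add_assoc]
  exact le_add_of_nonneg_right hB

lemma re_trace_cfc_rpowIntegrand₀₁_add_le {p t : ℝ} (hp : p ∈ Ioo 0 1) (ht : 0 < t)
    {A B : Matrix n n ℂ} (hA : 0 ≤ A) (hB : 0 ≤ B) :
    (cfc (rpowIntegrand₀₁ p t) (A + B)).trace.re ≤
      (cfc (rpowIntegrand₀₁ p t) A).trace.re + (cfc (rpowIntegrand₀₁ p t) B).trace.re := by
  simp only [cfc_rpowIntegrand₀₁_eq_smul_mul_ringInverse hp ht, hA, hB, add_nonneg, trace_smul,
    Complex.real_smul, Complex.re_ofReal_mul, Matrix.add_mul, trace_add, Complex.add_re, ← mul_add]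
  refine mul_le_mul_of_nonneg_left (add_le_add (re_trace_mul_ringInverse_add_le hA hB ht) ?_)
    (by positivity)
  rw [add_comm A B]
  exact re_trace_mul_ringInverse_add_le hB hA ht

lemma integrableOn_re_trace_cfc_rpowIntegrand₀₁ {p : ℝ} (hp : p ∈ Ioo 0 1) {A : Matrix n n ℂ}
    (hA : 0 ≤ A) :
    IntegrableOn (fun t => (cfc (rpowIntegrand₀₁ p t) A).trace.re) (Ioi 0) := by
  have hA' := nonneg_iff_posSemidef.mp hA
  simp only [hA'.isHermitian.re_trace_cfc]
  exact integrable_finsetSum _ fun i _ =>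
    integrableOn_rpowIntegrand₀₁_Ioi hp (hA'.eigenvalues_nonneg i)

lemma re_trace_rpow_mul_integral_eq {p : ℝ} (hp : p ∈ Ioo 0 1) {A : Matrix n n ℂ}
    (hA : 0 ≤ A) :
    (A ^ p).trace.re * ∫ t in Ioi 0, rpowIntegrand₀₁ p t 1 =
      ∫ t in Ioi 0, (cfc (rpowIntegrand₀₁ p t) A).trace.re := by
  have hA' := nonneg_iff_posSemidef.mp hA
  simp only [CFC.rpow_eq_cfc_real hA, hA'.isHermitian.re_trace_cfc, Finset.sum_mul]
  rw [integral_finsetSum _ fun i _ =>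
    integrableOn_rpowIntegrand₀₁_Ioi hp (hA'.eigenvalues_nonneg i)]
  exact Finset.sum_congr rfl fun i _ =>
    (integral_rpowIntegrand₀₁_eq_rpow_mul_const hp (hA'.eigenvalues_nonneg i)).symm

lemma re_trace_rpow_add_le {p : ℝ} (hp : p ∈ Ioo 0 1) {A B : Matrix n n ℂ} (hA : 0 ≤ A)
    (hB : 0 ≤ B) : ((A + B) ^ p).trace.re ≤ (A ^ p).trace.re + (B ^ p).trace.re := by
  have hint := fun {M : Matrix n n ℂ} (hM : 0 ≤ M) =>
    integrableOn_re_trace_cfc_rpowIntegrand₀₁ hp hM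
  refine le_of_mul_le_mul_right ?_ (integral_rpowIntegrand₀₁_one_pos hp)
  rw [add_mul, re_trace_rpow_mul_integral_eq hp (add_nonneg hA hB),
    re_trace_rpow_mul_integral_eq hp hA, re_trace_rpow_mul_integral_eq hp hB,
    ← integral_add (hint hA) (hint hB)]
  exact setIntegral_mono_on (hint (add_nonneg hA hB)) ((hint hA).add (hint hB)) measurableSet_Ioi
    fun t ht => re_trace_cfc_rpowIntegrand₀₁_add_le hp ht hA hB

lemma re_trace_rpow_sum_le {p : ℝ} (hp : p ∈ Ioo 0 1) {ι : Type*} (s : Finset ι)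
    {A : ι → Matrix n n ℂ} (hA : ∀ i ∈ s, 0 ≤ A i) :
    ((∑ i ∈ s, A i) ^ p).trace.re ≤ ∑ i ∈ s, (A i ^ p).trace.re :=
  Finset.le_sum_of_subadditive_on_pred (fun M => (M ^ p).trace.re) (0 ≤ ·)
    (by simp [show (0 : Matrix n n ℂ) ^ p = 0 from CFC.zero_rpow hp.1.ne'])
    (fun _ _ => re_trace_rpow_add_le hp) (fun _ _ => add_nonneg) A hA

lemma re_trace_smul_rpow {c : ℝ} (hc : 0 ≤ c) {A : Matrix n n ℂ} (hA : 0 ≤ A) {p : ℝ}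
    (hp : 0 ≤ p) : ((c • A) ^ p).trace.re = c ^ p * (A ^ p).trace.re := by
  rw [CFC.smul_rpow hc hA hp, trace_smul, Complex.real_smul, Complex.re_ofReal_mul]

lemma concaveOn_re_trace_rpow {p : ℝ} (hp : p ∈ Icc 0 1) :
    ConcaveOn ℝ (Ici (0 : Matrix n n ℂ)) (fun A => (A ^ p).trace.re) := by
  refine ⟨convex_Ici 0, fun A hA B hB a b ha hb hab => ?_⟩
  have h := re_trace_mono ((CFC.concaveOn_rpow hp).2 hA hB ha hb hab)
  rwa [trace_add, trace_smul, trace_smul, Complex.add_re, Complex.real_smul, Complex.real_smul,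
    Complex.re_ofReal_mul, Complex.re_ofReal_mul] at h

end Matrix

open Matrix

lemma mPow_eq_rpow {d : ℕ} {A : Matrix (Fin d) (Fin d) ℂ} (hA : 0 ≤ A) {p : ℝ} (hp : 0 < p) :
    mPow A p = A ^ p := by
  have hH := (nonneg_iff_posSemidef.mp hA).isHermitian
  rw [mPow, dif_pos hH, CFC.rpow_eq_cfc_real hA, hH.cfc_eq, IsHermitian.cfc,
    Unitary.conjStarAlgAut_apply]
  congr
  funext i
  split_ifs with h <;> simp [h, Real.zero_rpow hp.ne']

lemma Qnew_eq_re_trace_rpow {d : ℕ} {ρ σ : Matrix (Fin d) (Fin d) ℂ} (hρ : 0 ≤ ρ) (hσ : 0 ≤ σ)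
    {α : ℝ} (hα : α ∈ Ioo 0 1) :
    Qnew ρ σ α =
      ((σ ^ ((1 - α) / (2 * α)) * ρ * σ ^ ((1 - α) / (2 * α))) ^ α).trace.re := by
  have hβ : 0 < (1 - α) / (2 * α) := div_pos (by linarith [hα.2]) (by linarith [hα.1])
  rw [Qnew, mPow_eq_rpow hσ hβ, mPow_eq_rpow (conjugate_nonneg_of_nonneg hρ CFC.rpow_nonneg) hα.1]

theorem Qnew_concavity_complement_general {d r : ℕ}
    (ρ : Fin r → Matrix (Fin d) (Fin d) ℂ)
    (hρ : ∀ i, (ρ i).PosSemidef)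
    (σ : Matrix (Fin d) (Fin d) ℂ) (hσ : σ.PosSemidef)
    (γ : Fin r → ℝ) (hγ : ∀ i, 0 ≤ γ i) (hγ1 : ∑ i, γ i = 1)
    {α : ℝ} (hα : α ∈ Set.Ioo (0 : ℝ) 1) :
    ∑ i, γ i * Qnew (ρ i) σ α ≤ Qnew (∑ i, (γ i : ℂ) • ρ i) σ α ∧
    Qnew (∑ i, (γ i : ℂ) • ρ i) σ α ≤ ∑ i, γ i ^ α * Qnew (ρ i) σ α := by
  set S := σ ^ ((1 - α) / (2 * α))
  have hB : ∀ i, 0 ≤ S * ρ i * S := fun i =>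
    conjugate_nonneg_of_nonneg (hρ i).nonneg CFC.rpow_nonneg
  have hQ : ∀ i, Qnew (ρ i) σ α = ((S * ρ i * S) ^ α).trace.re := fun i =>
    Qnew_eq_re_trace_rpow (hρ i).nonneg hσ.nonneg hα
  have hQmix : Qnew (∑ i, (γ i : ℂ) • ρ i) σ α = ((∑ i, γ i • (S * ρ i * S)) ^ α).trace.re := by
    simp only [Complex.coe_smul]
    rw [Qnew_eq_re_trace_rpow (Finset.sum_nonneg fun i _ => smul_nonneg (hγ i) (hρ i).nonneg)
      hσ.nonneg hα, Matrix.mul_sum, Matrix.sum_mul]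
    simp only [Matrix.mul_smul, Matrix.smul_mul, S]
  refine ⟨?_, ?_⟩
  · simpa only [hQ, hQmix, smul_eq_mul] using
      (concaveOn_re_trace_rpow ⟨hα.1.le, hα.2.le⟩).le_map_sum (t := Finset.univ)
        (fun i _ => hγ i) hγ1 (fun i _ => hB i)
  · calc Qnew (∑ i, (γ i : ℂ) • ρ i) σ α
        ≤ ∑ i, ((γ i • (S * ρ i * S)) ^ α).trace.re :=
          hQmix ▸ re_trace_rpow_sum_le hα _ fun i _ => smul_nonneg (hγ i) (hB i)
      _ = ∑ i, γ i ^ α * Qnew (ρ i) σ α := by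
          refine Finset.sum_congr rfl fun i _ => ?_
          rw [hQ, re_trace_smul_rpow (hγ i) (hB i) hα.1.le]

theorem Qnew_concavity_complement {d r : ℕ} (hd : 1 ≤ d) (hr : 1 ≤ r)
    (ρ : Fin r → Matrix (Fin d) (Fin d) ℂ)
    (hρ : ∀ i, (ρ i).PosSemidef) (hρ1 : ∀ i, (ρ i).trace = 1)
    (σ : Matrix (Fin d) (Fin d) ℂ) (hσ : σ.PosSemidef) (hσ0 : σ ≠ 0)
    (γ : Fin r → ℝ) (hγ : ∀ i, 0 ≤ γ i) (hγ1 : ∑ i, γ i = 1)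
    {α : ℝ} (hα : α ∈ Set.Ioo (0 : ℝ) 1) :
    ∑ i, γ i * Qnew (ρ i) σ α ≤ Qnew (∑ i, (γ i : ℂ) • ρ i) σ α ∧
    Qnew (∑ i, (γ i : ℂ) • ρ i) σ α ≤ ∑ i, γ i ^ α * Qnew (ρ i) σ α :=
  Qnew_concavity_complement_general ρ hρ σ hσ γ hγ hγ1 hα
end

section
/- Let ω_1, …, ω_r (r ≥ 1) be states on a finite-dimensional space, let τ be a state on the same space, and let ε ∈ (0,1). Then β_ε({ω_1,…,ω_r}‖τ) ≤ β_{ε/r}((1/r)·Σ_{i=1}^r ω_i‖τ). -/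
open scoped BigOperators ComplexOrder

/-- The optimal type II error for testing the composite null-hypothesis M
against τ with the worst-case type I error bounded by ε. -/
noncomputable def betaSet {ι : Type*} [Fintype ι] [DecidableEq ι]
    (ε : ℝ) (M : Set (Matrix ι ι ℂ)) (τ : Matrix ι ι ℂ) : ℝ :=
  sInf {x : ℝ | ∃ T : Matrix ι ι ℂ,
    T.PosSemidef ∧ (1 - T).PosSemidef ∧
    (∀ ω ∈ M, ((ω * (1 - T)).trace).re ≤ ε) ∧ x = ((τ * T).trace).re}

/-!
A test whose type I error against the average state is at most ε/r has type I error at most ε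
against each ωᵢ: these errors Tr(ωᵢ(I - T)) are nonnegative and sum to r times the error against
the average. So every test admissible on the right is admissible on the left.
-/

open scoped MatrixOrder in
lemma Matrix.PosSemidef.re_trace_mul_nonneg {n 𝕜 : Type*} [Fintype n] [DecidableEq n] [RCLike 𝕜]
    {A B : Matrix n n 𝕜} (hA : A.PosSemidef) (hB : B.PosSemidef) :
    0 ≤ RCLike.re (A * B).trace := by
  obtain ⟨C, rfl⟩ := CStarAlgebra.nonneg_iff_eq_star_mul_self.mp hA.nonneg
  rw [Matrix.star_eq_conjTranspose, mul_assoc, Matrix.trace_mul_comm]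
  exact (RCLike.nonneg_iff.mp (hB.mul_mul_conjTranspose_same C).trace_nonneg).1

lemma Matrix.re_trace_inv_smul_sum_mul {n : Type*} [Fintype n] {r : ℕ}
    (ω : Fin r → Matrix n n ℂ) (E : Matrix n n ℂ) :
    (((r : ℂ)⁻¹ • ∑ i, ω i) * E).trace.re = (∑ i, (ω i * E).trace.re) / r := by
  rw [Matrix.smul_mul, Matrix.trace_smul, Finset.sum_mul, Matrix.trace_sum, smul_eq_mul,
    ← Complex.ofReal_natCast, ← Complex.ofReal_inv, Complex.re_ofReal_mul, Complex.re_sum,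
    inv_mul_eq_div]

theorem betaSet_le_betaSet_of_forall {ι : Type*} [Fintype ι] [DecidableEq ι] {ε ε' : ℝ}
    {M M' : Set (Matrix ι ι ℂ)} {τ : Matrix ι ι ℂ} (hτ : τ.PosSemidef) (hε' : 0 ≤ ε')
    (h : ∀ T : Matrix ι ι ℂ, T.PosSemidef → (1 - T).PosSemidef →
      (∀ ω ∈ M', ((ω * (1 - T)).trace).re ≤ ε') → ∀ ω ∈ M, ((ω * (1 - T)).trace).re ≤ ε) :
    betaSet ε M τ ≤ betaSet ε' M' τ := by
  refine csInf_le_csInf ⟨0, ?_⟩ ⟨_, 1, .one, by simpa using .zero, ?_, rfl⟩ ?_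
  · rintro _ ⟨T, hT, -, -, rfl⟩
    exact hτ.re_trace_mul_nonneg hT
  · simpa using fun _ _ ↦ hε'
  · rintro _ ⟨T, hT, hIT, hM', rfl⟩
    exact ⟨T, hT, hIT, h T hT hIT hM', rfl⟩

theorem betaSet_le_betaSet_average_general {ι : Type*} [Fintype ι] [DecidableEq ι]
    {r : ℕ} (hr : 1 ≤ r)
    (ω : Fin r → Matrix ι ι ℂ)
    (hω : ∀ i, (ω i).PosSemidef)
    (τ : Matrix ι ι ℂ) (hτ : τ.PosSemidef)
    {ε : ℝ} (hε : ε ∈ Set.Ioo (0 : ℝ) 1) :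
    betaSet ε {σ | ∃ i, σ = ω i} τ ≤
      betaSet (ε / r) {((r : ℂ))⁻¹ • ∑ i, ω i} τ := by
  have hr0 : (0 : ℝ) < r := by exact_mod_cast hr
  refine betaSet_le_betaSet_of_forall hτ (div_nonneg hε.1.le hr0.le) fun T _ hIT hAvg ↦ ?_
  rintro _ ⟨i, rfl⟩
  have hsum : (ω i * (1 - T)).trace.re ≤ ∑ j, (ω j * (1 - T)).trace.re :=
    Finset.single_le_sum (fun j _ ↦ (hω j).re_trace_mul_nonneg hIT) (Finset.mem_univ i)
  have hAvg := hAvg _ rfl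
  rw [Matrix.re_trace_inv_smul_sum_mul, div_le_div_iff_of_pos_right hr0] at hAvg
  exact hsum.trans hAvg

theorem betaSet_le_betaSet_average {ι : Type*} [Fintype ι] [DecidableEq ι]
    {r : ℕ} (hr : 1 ≤ r)
    (ω : Fin r → Matrix ι ι ℂ)
    (hω : ∀ i, (ω i).PosSemidef) (hω1 : ∀ i, (ω i).trace = 1)
    (τ : Matrix ι ι ℂ) (hτ : τ.PosSemidef) (hτ1 : τ.trace = 1)
    {ε : ℝ} (hε : ε ∈ Set.Ioo (0 : ℝ) 1) :
    betaSet ε {σ | ∃ i, σ = ω i} τ ≤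
      betaSet (ε / r) {((r : ℂ))⁻¹ • ∑ i, ω i} τ :=
  betaSet_le_betaSet_average_general hr ω hω τ hτ hε
end
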